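/- Let Σ be a finite alphabet and n, k₁, k₂ positive integers. Suppose Gen₁ : {0,1}^{s₁} → ({0,1}^n)^{k₁} is a γ₁-PRG for (k₁,n,Σ) block decision trees and Gen₂ : {0,1}^{s₂} → ({0,1}^n)^{k₂} is a γ₂-PRG for (k₂,n,Σ) block decision trees. Define Gen : {0,1}^{s₁+s₂} → ({0,1}^n)^{k₁+k₂} by Gen(x,y) = (Gen₁(x), Gen₂(y)) (concatenation of the two output tuples). Then Gen is a (γ₁+γ₂)-PRG for (k₁+k₂,n,Σ) block decision trees. -/
import Mathlib


open Classical

/-- Probability of `P` under the uniform distribution on a finite type. -/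
noncomputable def pr {α : Type*} [Fintype α] (P : α → Prop) : ℝ :=
  ((Finset.univ.filter P).card : ℝ) / (Fintype.card α : ℝ)

/-- `f : {0,1}^n → ℝ^d` is `(ε,δ)`-concentrated at `μ`. -/
def Concentrated (n d : ℕ) (ε δ : ℝ)
    (f : (Fin n → Bool) → Fin d → ℝ) (μ : Fin d → ℝ) : Prop :=
  pr (fun X : Fin n → Bool => ∃ j, |f X j - μ j| > ε) ≤ δ

/-- A deterministic owner for `k` rounds of `(ε,δ)`-concentrated functions
`{0,1}^n → ℝ^d`: given the history of responses `Y_1,…,Y_{i-1}`, it produces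
a function `f_i` together with a point `μ_i` at which `f_i` is concentrated. -/
structure Owner (n k d : ℕ) (ε δ : ℝ) where
  act : List (Fin d → ℝ) → (((Fin n → Bool) → Fin d → ℝ) × (Fin d → ℝ))
  conc : ∀ ys : List (Fin d → ℝ), ys.length < k →
    Concentrated n d ε δ (act ys).1 (act ys).2

/-- A one-query steward with randomness complexity `m`: in each round it chooses
a query point from its randomness and the past query answers, and it chooses a
response from its randomness and the past and current query answers. -/
structure Steward (n k d m : ℕ) where
  q : (Fin m → Bool) → List (Fin d → ℝ) → (Fin n → Bool)
  r : (Fin m → Bool) → List (Fin d → ℝ) → (Fin d → ℝ) → (Fin d → ℝ)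

/-- The interaction `O ↔ S(Z)` for `i` rounds: the list of triples `(Y_i, W_i, μ_i)`. -/
noncomputable def run {n k d m : ℕ} {ε δ : ℝ} (O : Owner n k d ε δ) (S : Steward n k d m)
    (Z : Fin m → Bool) : ℕ → List ((Fin d → ℝ) × (Fin d → ℝ) × (Fin d → ℝ))
  | 0 => []
  | i + 1 =>
    let h := run O S Z i
    let fμ := O.act (h.map fun p => p.1)
    let X := S.q Z (h.map fun p => p.2.1)
    let W := fμ.1 X
    h ++ [(S.r Z (h.map fun p => p.2.1) W, W, fμ.2)]

/-- `S` is a one-query `(ε',δ')`-steward for `k` adaptively chosen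
`(ε,δ)`-concentrated functions `{0,1}^n → ℝ^d`. -/
def IsSteward (n k d m : ℕ) (ε δ ε' δ' : ℝ) (S : Steward n k d m) : Prop :=
  ∀ O : Owner n k d ε δ,
    pr (fun Z : Fin m → Bool =>
      ∃ p ∈ run O S Z k, ∃ j : Fin d, |p.1 j - p.2.2 j| > ε') ≤ δ'

/-- The output string of a `(k,n,Σ)` block decision tree, given as the family of
node functions `v_w` indexed by strings `w`, on input the list `Xs` of blocks:
`σ_i = v_{(σ_1,…,σ_{i-1})}(X_i)`. -/
def treeOutList {A I : Type*} (v : List A → I → A) (Xs : List I) : List A :=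
  Xs.foldl (fun w X => w ++ [v w X]) []

/-- `Gen` is a `γ`-PRG for `(k,n,A)` block decision trees: for every tree, the total
variation distance between the output distribution on pseudorandom inputs and on
truly random inputs is at most `γ`. -/
def IsBDTPRG (n k s : ℕ) (A : Type*) [Fintype A] (γ : ℝ)
    (Gen : (Fin s → Bool) → Fin k → (Fin n → Bool)) : Prop :=
  ∀ v : List A → (Fin n → Bool) → A,
    (1 / 2) * ∑ σ : Fin k → A,
      |pr (fun x : Fin s → Bool => treeOutList v (List.ofFn (Gen x)) = List.ofFn σ)
        - pr (fun X : Fin k → (Fin n → Bool) => treeOutList v (List.ofFn X) = List.ofFn σ)|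
      ≤ γ


section auxlemmas

variable {α β : Type*}

lemma pr_nonneg [Fintype α] (P : α → Prop) : 0 ≤ pr P := by
  unfold pr; positivity

lemma pr_eq_sum [Fintype α] (P : α → Prop) :
    pr P = (∑ a : α, if P a then (1:ℝ) else 0) / (Fintype.card α) := by
  unfold pr; rw [Finset.sum_boole]

lemma pr_comp_equiv [Fintype α] [Fintype β] (e : α ≃ β) (P : β → Prop) :
    pr (fun a => P (e a)) = pr P := by
  unfold pr
  rw [Fintype.card_congr e]
  congr 2
  refine Finset.card_bij (fun a _ => e a) (fun a ha => ?_) (fun a _ b _ h => e.injective h)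
    (fun b hb => ⟨e.symm b, by simpa using (Finset.mem_filter.mp hb).2, by simp⟩)
  · simp only [Finset.mem_filter, Finset.mem_univ, true_and] at ha ⊢; exact ha

lemma pr_false [Fintype α] : pr (fun _ : α => False) = 0 := by
  unfold pr; simp

lemma pr_congr [Fintype α] {P Q : α → Prop} (h : ∀ a, P a ↔ Q a) : pr P = pr Q := by
  unfold pr
  rw [Finset.filter_congr (fun a (_ : a ∈ Finset.univ) => by simpa using h a)]

lemma pr_const_and [Fintype α] (C : Prop) (D : α → Prop) :
    pr (fun a : α => C ∧ D a) = if C then pr D else 0 := by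
  by_cases hC : C
  · simp only [hC, if_true]; exact pr_congr (fun a => by simp [hC])
  · simp only [hC, if_false]
    rw [← pr_false (α := α)]; exact pr_congr (fun a => by simp [hC])

lemma pr_and_const [Fintype α] (C : Prop) (D : α → Prop) :
    pr (fun a : α => D a ∧ C) = if C then pr D else 0 := by
  rw [← pr_const_and C D]; exact pr_congr (fun a => and_comm)

lemma pr_prod_fst [Fintype α] [Fintype β] [Nonempty α] [Nonempty β] (P : α × β → Prop) :
    pr P = (∑ a : α, pr (fun b => P (a, b))) / (Fintype.card α) := by
  have hα : (0:ℝ) < Fintype.card α := by positivity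
  have hβ : (0:ℝ) < Fintype.card β := by positivity
  rw [pr_eq_sum]
  simp only [pr_eq_sum]
  rw [← Finset.sum_div, Fintype.sum_prod_type, Fintype.card_prod]
  push_cast
  rw [div_div, mul_comm]

lemma pr_prod_snd [Fintype α] [Fintype β] [Nonempty α] [Nonempty β] (P : α × β → Prop) :
    pr P = (∑ b : β, pr (fun a => P (a, b))) / (Fintype.card β) := by
  rw [← pr_comp_equiv (Equiv.prodComm β α) P, pr_prod_fst]
  rfl

end auxlemmas

section auxtree

variable {A I : Type*}

lemma foldl_shift (Ys : List I) :
    ∀ (v : List A → I → A) (w₀ : List A), Ys.foldl (fun w X => w ++ [v w X]) w₀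
      = w₀ ++ treeOutList (fun w' => v (w₀ ++ w')) Ys := by
  induction Ys with
  | nil => intro v w₀; simp [treeOutList]
  | cons Y Ys ih =>
    intro v w₀
    simp only [List.foldl_cons, treeOutList]
    rw [ih v (w₀ ++ [v w₀ Y])]
    have h2 := ih (fun w' => v (w₀ ++ w')) ([] ++ [v (w₀ ++ []) Y])
    simp only [List.append_nil, List.nil_append] at h2 ⊢
    rw [h2]
    simp [List.append_assoc]

lemma treeOutList_append (v : List A → I → A) (L₁ L₂ : List I) :
    treeOutList v (L₁ ++ L₂)
      = treeOutList v L₁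
        ++ treeOutList (fun w => v (treeOutList v L₁ ++ w)) L₂ := by
  unfold treeOutList
  rw [List.foldl_append, foldl_shift]
  rfl

lemma length_foldl_aux (v : List A → I → A) (L : List I) :
    ∀ w₀ : List A, (L.foldl (fun w X => w ++ [v w X]) w₀).length = w₀.length + L.length := by
  induction L with
  | nil => intro w₀; simp
  | cons X L ih =>
    intro w₀
    rw [List.foldl_cons, ih]
    simp; omega

lemma length_treeOutList (v : List A → I → A) (L : List I) :
    (treeOutList v L).length = L.length := by
  unfold treeOutList
  rw [length_foldl_aux]
  simp

end auxtree

section auxsplit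

def splitEquiv (m n : ℕ) (α : Type*) : (Fin (m + n) → α) ≃ (Fin m → α) × (Fin n → α) where
  toFun z := (fun i => z (Fin.castAdd n i), fun i => z (Fin.natAdd m i))
  invFun p := Fin.append p.1 p.2
  left_inv z := by
    funext i
    refine Fin.addCases (fun i => ?_) (fun i => ?_) i
    · simp [Fin.append_left]
    · simp [Fin.append_right]
  right_inv p := by
    ext i
    · simp [Fin.append_left]
    · simp [Fin.append_right]

lemma sum_ite_ofFn {A : Type*} [Fintype A] {k : ℕ} (w : List A) (hw : w.length = k)
    (f : (Fin k → A) → ℝ) :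
    ∑ σ : Fin k → A, (if List.ofFn σ = w then f σ else 0)
      = f (fun i => w.get (Fin.cast hw.symm i)) := by
  have hofn : List.ofFn (fun i : Fin k => w.get (Fin.cast hw.symm i)) = w := by
    apply List.ext_getElem
    · simp [hw]
    · intro i h1 h2
      simp [List.getElem_ofFn]
  rw [Finset.sum_eq_single (fun i : Fin k => w.get (Fin.cast hw.symm i))]
  · rw [if_pos hofn]
  · intro σ _ hne
    rw [if_neg]
    intro h
    exact hne (List.ofFn_injective (by rw [h, hofn]))
  · intro h; exact absurd (Finset.mem_univ _) h

end auxsplit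

section auxinner

variable {n k₁ k₂ s₁ s₂ : ℕ} {A : Type} [Fintype A]

lemma innerA {γ₂ : ℝ} {Gen₂ : (Fin s₂ → Bool) → Fin k₂ → (Fin n → Bool)}
    (h₂ : IsBDTPRG n k₂ s₂ A γ₂ Gen₂) (v : List A → (Fin n → Bool) → A)
    (X1 : Fin k₁ → (Fin n → Bool)) :
    (1/2) * ∑ σ₁ : Fin k₁ → A, ∑ σ₂ : Fin k₂ → A,
      |pr (fun y : Fin s₂ → Bool =>
          treeOutList v (List.ofFn X1 ++ List.ofFn (Gen₂ y)) = List.ofFn σ₁ ++ List.ofFn σ₂)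
       - pr (fun Y : Fin k₂ → (Fin n → Bool) =>
          treeOutList v (List.ofFn X1 ++ List.ofFn Y) = List.ofFn σ₁ ++ List.ofFn σ₂)| ≤ γ₂ := by
  have hev : ∀ (L : List (Fin n → Bool)) (σ₁ : Fin k₁ → A) (σ₂ : Fin k₂ → A),
      (treeOutList v (List.ofFn X1 ++ L) = List.ofFn σ₁ ++ List.ofFn σ₂)
        ↔ (treeOutList v (List.ofFn X1) = List.ofFn σ₁
            ∧ treeOutList (fun w => v (treeOutList v (List.ofFn X1) ++ w)) L = List.ofFn σ₂) := by
    intro L σ₁ σ₂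
    rw [treeOutList_append]
    constructor
    · intro h
      exact List.append_inj h (by simp [length_treeOutList])
    · rintro ⟨h1, h2⟩
      rw [h1] at h2 ⊢
      rw [h2]
  have step1 : ∀ (σ₁ : Fin k₁ → A) (σ₂ : Fin k₂ → A),
      |pr (fun y : Fin s₂ → Bool =>
          treeOutList v (List.ofFn X1 ++ List.ofFn (Gen₂ y)) = List.ofFn σ₁ ++ List.ofFn σ₂)
       - pr (fun Y : Fin k₂ → (Fin n → Bool) =>
          treeOutList v (List.ofFn X1 ++ List.ofFn Y) = List.ofFn σ₁ ++ List.ofFn σ₂)|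
      = if List.ofFn σ₁ = treeOutList v (List.ofFn X1) then
          |pr (fun y : Fin s₂ → Bool =>
              treeOutList (fun w => v (treeOutList v (List.ofFn X1) ++ w)) (List.ofFn (Gen₂ y))
                = List.ofFn σ₂)
           - pr (fun Y : Fin k₂ → (Fin n → Bool) =>
              treeOutList (fun w => v (treeOutList v (List.ofFn X1) ++ w)) (List.ofFn Y)
                = List.ofFn σ₂)|
        else 0 := by
    intro σ₁ σ₂
    rw [pr_congr (fun y => hev _ σ₁ σ₂), pr_congr (fun Y => hev _ σ₁ σ₂),
      pr_const_and, pr_const_and]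
    by_cases hC : treeOutList v (List.ofFn X1) = List.ofFn σ₁
    · rw [if_pos hC, if_pos hC, if_pos hC.symm]
    · rw [if_neg hC, if_neg hC, if_neg (fun h => hC h.symm)]
      simp
  calc (1/2) * ∑ σ₁ : Fin k₁ → A, ∑ σ₂ : Fin k₂ → A,
      |pr (fun y : Fin s₂ → Bool =>
          treeOutList v (List.ofFn X1 ++ List.ofFn (Gen₂ y)) = List.ofFn σ₁ ++ List.ofFn σ₂)
       - pr (fun Y : Fin k₂ → (Fin n → Bool) =>
          treeOutList v (List.ofFn X1 ++ List.ofFn Y) = List.ofFn σ₁ ++ List.ofFn σ₂)|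
      = (1/2) * ∑ σ₁ : Fin k₁ → A, (if List.ofFn σ₁ = treeOutList v (List.ofFn X1) then
          (∑ σ₂ : Fin k₂ → A,
            |pr (fun y : Fin s₂ → Bool =>
                treeOutList (fun w => v (treeOutList v (List.ofFn X1) ++ w)) (List.ofFn (Gen₂ y))
                  = List.ofFn σ₂)
             - pr (fun Y : Fin k₂ → (Fin n → Bool) =>
                treeOutList (fun w => v (treeOutList v (List.ofFn X1) ++ w)) (List.ofFn Y)
                  = List.ofFn σ₂)|)
          else 0) := by
        congr 1
        refine Finset.sum_congr rfl (fun σ₁ _ => ?_)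
        rw [Finset.sum_congr rfl (fun σ₂ _ => step1 σ₁ σ₂)]
        by_cases hC : List.ofFn σ₁ = treeOutList v (List.ofFn X1) <;> simp [hC]
    _ = (1/2) * ∑ σ₂ : Fin k₂ → A,
          |pr (fun y : Fin s₂ → Bool =>
              treeOutList (fun w => v (treeOutList v (List.ofFn X1) ++ w)) (List.ofFn (Gen₂ y))
                = List.ofFn σ₂)
           - pr (fun Y : Fin k₂ → (Fin n → Bool) =>
              treeOutList (fun w => v (treeOutList v (List.ofFn X1) ++ w)) (List.ofFn Y)
                = List.ofFn σ₂)| := by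
        rw [sum_ite_ofFn (treeOutList v (List.ofFn X1)) (by simp [length_treeOutList]) (fun _ => _)]
    _ ≤ γ₂ := h₂ (fun w => v (treeOutList v (List.ofFn X1) ++ w))

lemma innerB {γ₁ : ℝ} {Gen₁ : (Fin s₁ → Bool) → Fin k₁ → (Fin n → Bool)}
    (h₁ : IsBDTPRG n k₁ s₁ A γ₁ Gen₁) (v : List A → (Fin n → Bool) → A)
    (Y : Fin k₂ → (Fin n → Bool)) :
    (1/2) * ∑ σ₁ : Fin k₁ → A, ∑ σ₂ : Fin k₂ → A,
      |pr (fun x : Fin s₁ → Bool =>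
          treeOutList v (List.ofFn (Gen₁ x) ++ List.ofFn Y) = List.ofFn σ₁ ++ List.ofFn σ₂)
       - pr (fun X : Fin k₁ → (Fin n → Bool) =>
          treeOutList v (List.ofFn X ++ List.ofFn Y) = List.ofFn σ₁ ++ List.ofFn σ₂)| ≤ γ₁ := by
  have hev : ∀ (X1 : Fin k₁ → (Fin n → Bool)) (σ₁ : Fin k₁ → A) (σ₂ : Fin k₂ → A),
      (treeOutList v (List.ofFn X1 ++ List.ofFn Y) = List.ofFn σ₁ ++ List.ofFn σ₂)
        ↔ (treeOutList v (List.ofFn X1) = List.ofFn σ₁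
            ∧ treeOutList (fun w => v (List.ofFn σ₁ ++ w)) (List.ofFn Y) = List.ofFn σ₂) := by
    intro X1 σ₁ σ₂
    rw [treeOutList_append]
    constructor
    · intro h
      obtain ⟨h1, h2⟩ := List.append_inj h (by simp [length_treeOutList])
      refine ⟨h1, ?_⟩
      rw [← h1]
      exact h2
    · rintro ⟨h1, h2⟩
      rw [h1, h2]
  have step1 : ∀ (σ₁ : Fin k₁ → A) (σ₂ : Fin k₂ → A),
      |pr (fun x : Fin s₁ → Bool =>
          treeOutList v (List.ofFn (Gen₁ x) ++ List.ofFn Y) = List.ofFn σ₁ ++ List.ofFn σ₂)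
       - pr (fun X : Fin k₁ → (Fin n → Bool) =>
          treeOutList v (List.ofFn X ++ List.ofFn Y) = List.ofFn σ₁ ++ List.ofFn σ₂)|
      = if List.ofFn σ₂ = treeOutList (fun w => v (List.ofFn σ₁ ++ w)) (List.ofFn Y) then
          |pr (fun x : Fin s₁ → Bool => treeOutList v (List.ofFn (Gen₁ x)) = List.ofFn σ₁)
           - pr (fun X : Fin k₁ → (Fin n → Bool) => treeOutList v (List.ofFn X) = List.ofFn σ₁)|
        else 0 := by
    intro σ₁ σ₂
    rw [pr_congr (fun x => hev _ σ₁ σ₂), pr_congr (fun X => hev _ σ₁ σ₂),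
      pr_and_const, pr_and_const]
    by_cases hC : treeOutList (fun w => v (List.ofFn σ₁ ++ w)) (List.ofFn Y) = List.ofFn σ₂
    · rw [if_pos hC, if_pos hC, if_pos hC.symm]
    · rw [if_neg hC, if_neg hC, if_neg (fun h => hC h.symm)]
      simp
  calc (1/2) * ∑ σ₁ : Fin k₁ → A, ∑ σ₂ : Fin k₂ → A,
      |pr (fun x : Fin s₁ → Bool =>
          treeOutList v (List.ofFn (Gen₁ x) ++ List.ofFn Y) = List.ofFn σ₁ ++ List.ofFn σ₂)
       - pr (fun X : Fin k₁ → (Fin n → Bool) =>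
          treeOutList v (List.ofFn X ++ List.ofFn Y) = List.ofFn σ₁ ++ List.ofFn σ₂)|
      = (1/2) * ∑ σ₁ : Fin k₁ → A,
          |pr (fun x : Fin s₁ → Bool => treeOutList v (List.ofFn (Gen₁ x)) = List.ofFn σ₁)
           - pr (fun X : Fin k₁ → (Fin n → Bool) => treeOutList v (List.ofFn X) = List.ofFn σ₁)| := by
        congr 1
        refine Finset.sum_congr rfl (fun σ₁ _ => ?_)
        rw [Finset.sum_congr rfl (fun σ₂ _ => step1 σ₁ σ₂),
          sum_ite_ofFn (treeOutList (fun w => v (List.ofFn σ₁ ++ w)) (List.ofFn Y))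
            (by simp [length_treeOutList]) (fun _ => _)]
    _ ≤ γ₁ := h₁ v

end auxinner

section auxavg

lemma avg_bound {ι S₁ S₂ : Type*} [Fintype ι] [Nonempty ι] [Fintype S₁] [Fintype S₂]
    (f g : ι → S₁ → S₂ → ℝ) (γ : ℝ)
    (h : ∀ i, (1/2) * ∑ s₁ : S₁, ∑ s₂ : S₂, |f i s₁ s₂ - g i s₁ s₂| ≤ γ) :
    (1/2) * ∑ s₁ : S₁, ∑ s₂ : S₂,
      |(∑ i, f i s₁ s₂) / (Fintype.card ι : ℝ) - (∑ i, g i s₁ s₂) / (Fintype.card ι : ℝ)|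
      ≤ γ := by
  have hN : (0:ℝ) < (Fintype.card ι : ℝ) := by positivity
  have key : ∀ s₁ s₂, |(∑ i, f i s₁ s₂) / (Fintype.card ι : ℝ)
      - (∑ i, g i s₁ s₂) / (Fintype.card ι : ℝ)|
      ≤ (∑ i, |f i s₁ s₂ - g i s₁ s₂|) / (Fintype.card ι : ℝ) := by
    intro s₁ s₂
    rw [div_sub_div_same, ← Finset.sum_sub_distrib, abs_div, abs_of_pos hN]
    gcongr
    exact Finset.abs_sum_le_sum_abs _ _
  have swap : ∑ s₁ : S₁, ∑ s₂ : S₂, ∑ i : ι, |f i s₁ s₂ - g i s₁ s₂|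
      = ∑ i : ι, ∑ s₁ : S₁, ∑ s₂ : S₂, |f i s₁ s₂ - g i s₁ s₂| := by
    rw [Finset.sum_congr rfl (fun s₁ (_ : s₁ ∈ Finset.univ) => Finset.sum_comm), Finset.sum_comm]
  calc (1/2) * ∑ s₁ : S₁, ∑ s₂ : S₂,
      |(∑ i, f i s₁ s₂) / (Fintype.card ι : ℝ) - (∑ i, g i s₁ s₂) / (Fintype.card ι : ℝ)|
      ≤ (1/2) * ∑ s₁ : S₁, ∑ s₂ : S₂, (∑ i, |f i s₁ s₂ - g i s₁ s₂|) / (Fintype.card ι : ℝ) := by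
        have h1 : ∀ s₁ : S₁, ∑ s₂ : S₂,
            |(∑ i, f i s₁ s₂) / (Fintype.card ι : ℝ) - (∑ i, g i s₁ s₂) / (Fintype.card ι : ℝ)|
            ≤ ∑ s₂ : S₂, (∑ i, |f i s₁ s₂ - g i s₁ s₂|) / (Fintype.card ι : ℝ) := fun s₁ =>
          Finset.sum_le_sum (fun s₂ _ => key s₁ s₂)
        have h2 := Finset.sum_le_sum (fun s₁ (_ : s₁ ∈ Finset.univ) => h1 s₁)
        linarith
    _ = (∑ i : ι, (1/2) * ∑ s₁ : S₁, ∑ s₂ : S₂, |f i s₁ s₂ - g i s₁ s₂|) / (Fintype.card ι : ℝ) := by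
        simp only [← Finset.sum_div]
        rw [swap, ← mul_div_assoc, Finset.mul_sum]
    _ ≤ (∑ _i : ι, γ) / (Fintype.card ι : ℝ) := by
        gcongr
        exact h _
    _ = γ := by
        rw [Finset.sum_const, Finset.card_univ, nsmul_eq_mul]
        field_simp

end auxavg

/-- concatenation: if `Gen₁` is a `γ₁`-PRG for `(k₁,n,Σ)` block decision
trees and `Gen₂` is a `γ₂`-PRG for `(k₂,n,Σ)` block decision trees, then
`Gen(x,y) = (Gen₁(x), Gen₂(y))` is a `(γ₁+γ₂)`-PRG for `(k₁+k₂,n,Σ)` block decision trees. -/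
theorem bdt_prg_concat (n k₁ k₂ s₁ s₂ : ℕ) (hn : 0 < n) (hk₁ : 0 < k₁) (hk₂ : 0 < k₂)
    (A : Type) [Fintype A] (γ₁ γ₂ : ℝ)
    (Gen₁ : (Fin s₁ → Bool) → Fin k₁ → (Fin n → Bool))
    (Gen₂ : (Fin s₂ → Bool) → Fin k₂ → (Fin n → Bool))
    (h₁ : IsBDTPRG n k₁ s₁ A γ₁ Gen₁) (h₂ : IsBDTPRG n k₂ s₂ A γ₂ Gen₂) :
    IsBDTPRG n (k₁ + k₂) (s₁ + s₂) A (γ₁ + γ₂)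
      (fun z => Fin.append (Gen₁ fun i => z (Fin.castAdd s₂ i))
        (Gen₂ fun i => z (Fin.natAdd s₁ i))) := by
  intro v
  -- split the sum over σ
  have hsum : ∀ (F : List A → ℝ),
      ∑ σ : Fin (k₁ + k₂) → A, F (List.ofFn σ)
        = ∑ σ₁ : Fin k₁ → A, ∑ σ₂ : Fin k₂ → A, F (List.ofFn σ₁ ++ List.ofFn σ₂) := by
    intro F
    rw [← Equiv.sum_comp (splitEquiv k₁ k₂ A).symm
      (fun σ : Fin (k₁ + k₂) → A => F (List.ofFn σ)), Fintype.sum_prod_type]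
    refine Finset.sum_congr rfl fun σ₁ _ => Finset.sum_congr rfl fun σ₂ _ => ?_
    show F (List.ofFn (Fin.append σ₁ σ₂)) = _
    rw [List.ofFn_fin_append]
  -- rewrite the pseudorandom probability as a probability over pairs
  have hz : ∀ (L : List A),
      pr (fun z : Fin (s₁ + s₂) → Bool =>
        treeOutList v (List.ofFn (Fin.append (Gen₁ fun i => z (Fin.castAdd s₂ i))
          (Gen₂ fun i => z (Fin.natAdd s₁ i)))) = L)
      = pr (fun p : (Fin s₁ → Bool) × (Fin s₂ → Bool) =>
          treeOutList v (List.ofFn (Gen₁ p.1) ++ List.ofFn (Gen₂ p.2)) = L) := by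
    intro L
    rw [← pr_comp_equiv (splitEquiv s₁ s₂ Bool)
      (fun p : (Fin s₁ → Bool) × (Fin s₂ → Bool) =>
        treeOutList v (List.ofFn (Gen₁ p.1) ++ List.ofFn (Gen₂ p.2)) = L)]
    apply pr_congr
    intro z
    show _ ↔ treeOutList v (List.ofFn (Gen₁ fun i => z (Fin.castAdd s₂ i))
        ++ List.ofFn (Gen₂ fun i => z (Fin.natAdd s₁ i))) = L
    rw [List.ofFn_fin_append]
  -- rewrite the truly random probability as a probability over pairs
  have hX : ∀ (L : List A),
      pr (fun X : Fin (k₁ + k₂) → (Fin n → Bool) => treeOutList v (List.ofFn X) = L)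
      = pr (fun p : (Fin k₁ → (Fin n → Bool)) × (Fin k₂ → (Fin n → Bool)) =>
          treeOutList v (List.ofFn p.1 ++ List.ofFn p.2) = L) := by
    intro L
    rw [← pr_comp_equiv (splitEquiv k₁ k₂ (Fin n → Bool))
      (fun p : (Fin k₁ → (Fin n → Bool)) × (Fin k₂ → (Fin n → Bool)) =>
        treeOutList v (List.ofFn p.1 ++ List.ofFn p.2) = L)]
    apply pr_congr
    intro X
    show _ ↔ treeOutList v (List.ofFn (fun i => X (Fin.castAdd k₂ i))
        ++ List.ofFn (fun i => X (Fin.natAdd k₁ i))) = L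
    rw [← List.ofFn_fin_append]
    rw [show Fin.append (fun i => X (Fin.castAdd k₂ i)) (fun i => X (Fin.natAdd k₁ i)) = X from
      (splitEquiv k₁ k₂ (Fin n → Bool)).left_inv X]
  -- the three distributions on pairs
  have claimA : (1/2) * ∑ σ₁ : Fin k₁ → A, ∑ σ₂ : Fin k₂ → A,
      |pr (fun p : (Fin s₁ → Bool) × (Fin s₂ → Bool) =>
          treeOutList v (List.ofFn (Gen₁ p.1) ++ List.ofFn (Gen₂ p.2))
            = List.ofFn σ₁ ++ List.ofFn σ₂)
       - pr (fun p : (Fin s₁ → Bool) × (Fin k₂ → (Fin n → Bool)) =>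
          treeOutList v (List.ofFn (Gen₁ p.1) ++ List.ofFn p.2)
            = List.ofFn σ₁ ++ List.ofFn σ₂)| ≤ γ₂ := by
    have hrw : ∀ (σ₁ : Fin k₁ → A) (σ₂ : Fin k₂ → A),
        |pr (fun p : (Fin s₁ → Bool) × (Fin s₂ → Bool) =>
            treeOutList v (List.ofFn (Gen₁ p.1) ++ List.ofFn (Gen₂ p.2))
              = List.ofFn σ₁ ++ List.ofFn σ₂)
         - pr (fun p : (Fin s₁ → Bool) × (Fin k₂ → (Fin n → Bool)) =>
            treeOutList v (List.ofFn (Gen₁ p.1) ++ List.ofFn p.2)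
              = List.ofFn σ₁ ++ List.ofFn σ₂)|
        = |(∑ x : Fin s₁ → Bool, pr (fun y : Fin s₂ → Bool =>
              treeOutList v (List.ofFn (Gen₁ x) ++ List.ofFn (Gen₂ y))
                = List.ofFn σ₁ ++ List.ofFn σ₂)) / (Fintype.card (Fin s₁ → Bool) : ℝ)
           - (∑ x : Fin s₁ → Bool, pr (fun Y : Fin k₂ → (Fin n → Bool) =>
              treeOutList v (List.ofFn (Gen₁ x) ++ List.ofFn Y)
                = List.ofFn σ₁ ++ List.ofFn σ₂)) / (Fintype.card (Fin s₁ → Bool) : ℝ)| := by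
      intro σ₁ σ₂
      have e1 : pr (fun p : (Fin s₁ → Bool) × (Fin s₂ → Bool) =>
            treeOutList v (List.ofFn (Gen₁ p.1) ++ List.ofFn (Gen₂ p.2))
              = List.ofFn σ₁ ++ List.ofFn σ₂)
          = (∑ x : Fin s₁ → Bool, pr (fun y : Fin s₂ → Bool =>
              treeOutList v (List.ofFn (Gen₁ x) ++ List.ofFn (Gen₂ y))
                = List.ofFn σ₁ ++ List.ofFn σ₂)) / (Fintype.card (Fin s₁ → Bool) : ℝ) :=
        pr_prod_fst _
      have e2 : pr (fun p : (Fin s₁ → Bool) × (Fin k₂ → (Fin n → Bool)) =>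
            treeOutList v (List.ofFn (Gen₁ p.1) ++ List.ofFn p.2)
              = List.ofFn σ₁ ++ List.ofFn σ₂)
          = (∑ x : Fin s₁ → Bool, pr (fun Y : Fin k₂ → (Fin n → Bool) =>
              treeOutList v (List.ofFn (Gen₁ x) ++ List.ofFn Y)
                = List.ofFn σ₁ ++ List.ofFn σ₂)) / (Fintype.card (Fin s₁ → Bool) : ℝ) :=
        pr_prod_fst _
      rw [e1, e2]
    calc (1/2) * ∑ σ₁ : Fin k₁ → A, ∑ σ₂ : Fin k₂ → A, _
        = (1/2) * ∑ σ₁ : Fin k₁ → A, ∑ σ₂ : Fin k₂ → A,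
          |(∑ x : Fin s₁ → Bool, pr (fun y : Fin s₂ → Bool =>
              treeOutList v (List.ofFn (Gen₁ x) ++ List.ofFn (Gen₂ y))
                = List.ofFn σ₁ ++ List.ofFn σ₂)) / (Fintype.card (Fin s₁ → Bool) : ℝ)
           - (∑ x : Fin s₁ → Bool, pr (fun Y : Fin k₂ → (Fin n → Bool) =>
              treeOutList v (List.ofFn (Gen₁ x) ++ List.ofFn Y)
                = List.ofFn σ₁ ++ List.ofFn σ₂)) / (Fintype.card (Fin s₁ → Bool) : ℝ)| := by
          congr 1
          exact Finset.sum_congr rfl fun σ₁ _ => Finset.sum_congr rfl fun σ₂ _ => hrw σ₁ σ₂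
      _ ≤ γ₂ := avg_bound _ _ γ₂ (fun x => innerA h₂ v (Gen₁ x))
  have claimB : (1/2) * ∑ σ₁ : Fin k₁ → A, ∑ σ₂ : Fin k₂ → A,
      |pr (fun p : (Fin s₁ → Bool) × (Fin k₂ → (Fin n → Bool)) =>
          treeOutList v (List.ofFn (Gen₁ p.1) ++ List.ofFn p.2)
            = List.ofFn σ₁ ++ List.ofFn σ₂)
       - pr (fun p : (Fin k₁ → (Fin n → Bool)) × (Fin k₂ → (Fin n → Bool)) =>
          treeOutList v (List.ofFn p.1 ++ List.ofFn p.2)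
            = List.ofFn σ₁ ++ List.ofFn σ₂)| ≤ γ₁ := by
    have hrw : ∀ (σ₁ : Fin k₁ → A) (σ₂ : Fin k₂ → A),
        |pr (fun p : (Fin s₁ → Bool) × (Fin k₂ → (Fin n → Bool)) =>
            treeOutList v (List.ofFn (Gen₁ p.1) ++ List.ofFn p.2)
              = List.ofFn σ₁ ++ List.ofFn σ₂)
         - pr (fun p : (Fin k₁ → (Fin n → Bool)) × (Fin k₂ → (Fin n → Bool)) =>
            treeOutList v (List.ofFn p.1 ++ List.ofFn p.2)
              = List.ofFn σ₁ ++ List.ofFn σ₂)|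
        = |(∑ Y : Fin k₂ → (Fin n → Bool), pr (fun x : Fin s₁ → Bool =>
              treeOutList v (List.ofFn (Gen₁ x) ++ List.ofFn Y)
                = List.ofFn σ₁ ++ List.ofFn σ₂)) / (Fintype.card (Fin k₂ → (Fin n → Bool)) : ℝ)
           - (∑ Y : Fin k₂ → (Fin n → Bool), pr (fun X : Fin k₁ → (Fin n → Bool) =>
              treeOutList v (List.ofFn X ++ List.ofFn Y)
                = List.ofFn σ₁ ++ List.ofFn σ₂)) / (Fintype.card (Fin k₂ → (Fin n → Bool)) : ℝ)| := by
      intro σ₁ σ₂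
      have e1 : pr (fun p : (Fin s₁ → Bool) × (Fin k₂ → (Fin n → Bool)) =>
            treeOutList v (List.ofFn (Gen₁ p.1) ++ List.ofFn p.2)
              = List.ofFn σ₁ ++ List.ofFn σ₂)
          = (∑ Y : Fin k₂ → (Fin n → Bool), pr (fun x : Fin s₁ → Bool =>
              treeOutList v (List.ofFn (Gen₁ x) ++ List.ofFn Y)
                = List.ofFn σ₁ ++ List.ofFn σ₂)) / (Fintype.card (Fin k₂ → (Fin n → Bool)) : ℝ) :=
        pr_prod_snd _
      have e2 : pr (fun p : (Fin k₁ → (Fin n → Bool)) × (Fin k₂ → (Fin n → Bool)) =>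
            treeOutList v (List.ofFn p.1 ++ List.ofFn p.2)
              = List.ofFn σ₁ ++ List.ofFn σ₂)
          = (∑ Y : Fin k₂ → (Fin n → Bool), pr (fun X : Fin k₁ → (Fin n → Bool) =>
              treeOutList v (List.ofFn X ++ List.ofFn Y)
                = List.ofFn σ₁ ++ List.ofFn σ₂)) / (Fintype.card (Fin k₂ → (Fin n → Bool)) : ℝ) :=
        pr_prod_snd _
      rw [e1, e2]
    calc (1/2) * ∑ σ₁ : Fin k₁ → A, ∑ σ₂ : Fin k₂ → A, _
        = (1/2) * ∑ σ₁ : Fin k₁ → A, ∑ σ₂ : Fin k₂ → A,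
          |(∑ Y : Fin k₂ → (Fin n → Bool), pr (fun x : Fin s₁ → Bool =>
              treeOutList v (List.ofFn (Gen₁ x) ++ List.ofFn Y)
                = List.ofFn σ₁ ++ List.ofFn σ₂)) / (Fintype.card (Fin k₂ → (Fin n → Bool)) : ℝ)
           - (∑ Y : Fin k₂ → (Fin n → Bool), pr (fun X : Fin k₁ → (Fin n → Bool) =>
              treeOutList v (List.ofFn X ++ List.ofFn Y)
                = List.ofFn σ₁ ++ List.ofFn σ₂)) / (Fintype.card (Fin k₂ → (Fin n → Bool)) : ℝ)| := by
          congr 1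
          exact Finset.sum_congr rfl fun σ₁ _ => Finset.sum_congr rfl fun σ₂ _ => hrw σ₁ σ₂
      _ ≤ γ₁ := avg_bound _ _ γ₁ (fun Y => innerB h₁ v Y)
  -- assemble
  calc (1 / 2) * ∑ σ : Fin (k₁ + k₂) → A,
      |pr (fun x : Fin (s₁ + s₂) → Bool =>
          treeOutList v (List.ofFn (Fin.append (Gen₁ fun i => x (Fin.castAdd s₂ i))
            (Gen₂ fun i => x (Fin.natAdd s₁ i)))) = List.ofFn σ)
        - pr (fun X : Fin (k₁ + k₂) → (Fin n → Bool) =>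
            treeOutList v (List.ofFn X) = List.ofFn σ)|
      = (1 / 2) * ∑ σ₁ : Fin k₁ → A, ∑ σ₂ : Fin k₂ → A,
        |pr (fun x : Fin (s₁ + s₂) → Bool =>
            treeOutList v (List.ofFn (Fin.append (Gen₁ fun i => x (Fin.castAdd s₂ i))
              (Gen₂ fun i => x (Fin.natAdd s₁ i)))) = List.ofFn σ₁ ++ List.ofFn σ₂)
          - pr (fun X : Fin (k₁ + k₂) → (Fin n → Bool) =>
              treeOutList v (List.ofFn X) = List.ofFn σ₁ ++ List.ofFn σ₂)| := by
        congr 1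
        exact hsum (fun L =>
          |pr (fun x : Fin (s₁ + s₂) → Bool =>
            treeOutList v (List.ofFn (Fin.append (Gen₁ fun i => x (Fin.castAdd s₂ i))
              (Gen₂ fun i => x (Fin.natAdd s₁ i)))) = L)
          - pr (fun X : Fin (k₁ + k₂) → (Fin n → Bool) => treeOutList v (List.ofFn X) = L)|)
    _ = (1 / 2) * ∑ σ₁ : Fin k₁ → A, ∑ σ₂ : Fin k₂ → A,
        |pr (fun p : (Fin s₁ → Bool) × (Fin s₂ → Bool) =>
            treeOutList v (List.ofFn (Gen₁ p.1) ++ List.ofFn (Gen₂ p.2))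
              = List.ofFn σ₁ ++ List.ofFn σ₂)
          - pr (fun p : (Fin k₁ → (Fin n → Bool)) × (Fin k₂ → (Fin n → Bool)) =>
              treeOutList v (List.ofFn p.1 ++ List.ofFn p.2)
                = List.ofFn σ₁ ++ List.ofFn σ₂)| := by
        congr 1
        exact Finset.sum_congr rfl fun σ₁ _ => Finset.sum_congr rfl fun σ₂ _ => by
          rw [hz (List.ofFn σ₁ ++ List.ofFn σ₂), hX (List.ofFn σ₁ ++ List.ofFn σ₂)]
    _ ≤ (1 / 2) * ∑ σ₁ : Fin k₁ → A, ∑ σ₂ : Fin k₂ → A,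
        (|pr (fun p : (Fin s₁ → Bool) × (Fin s₂ → Bool) =>
            treeOutList v (List.ofFn (Gen₁ p.1) ++ List.ofFn (Gen₂ p.2))
              = List.ofFn σ₁ ++ List.ofFn σ₂)
          - pr (fun p : (Fin s₁ → Bool) × (Fin k₂ → (Fin n → Bool)) =>
            treeOutList v (List.ofFn (Gen₁ p.1) ++ List.ofFn p.2)
              = List.ofFn σ₁ ++ List.ofFn σ₂)|
        + |pr (fun p : (Fin s₁ → Bool) × (Fin k₂ → (Fin n → Bool)) =>
            treeOutList v (List.ofFn (Gen₁ p.1) ++ List.ofFn p.2)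
              = List.ofFn σ₁ ++ List.ofFn σ₂)
          - pr (fun p : (Fin k₁ → (Fin n → Bool)) × (Fin k₂ → (Fin n → Bool)) =>
              treeOutList v (List.ofFn p.1 ++ List.ofFn p.2)
                = List.ofFn σ₁ ++ List.ofFn σ₂)|) := by
        gcongr with σ₁ _ σ₂ _
        exact abs_sub_le _ _ _
    _ = (1/2) * (∑ σ₁ : Fin k₁ → A, ∑ σ₂ : Fin k₂ → A,
        |pr (fun p : (Fin s₁ → Bool) × (Fin s₂ → Bool) =>
            treeOutList v (List.ofFn (Gen₁ p.1) ++ List.ofFn (Gen₂ p.2))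
              = List.ofFn σ₁ ++ List.ofFn σ₂)
          - pr (fun p : (Fin s₁ → Bool) × (Fin k₂ → (Fin n → Bool)) =>
            treeOutList v (List.ofFn (Gen₁ p.1) ++ List.ofFn p.2)
              = List.ofFn σ₁ ++ List.ofFn σ₂)|)
      + (1/2) * (∑ σ₁ : Fin k₁ → A, ∑ σ₂ : Fin k₂ → A,
        |pr (fun p : (Fin s₁ → Bool) × (Fin k₂ → (Fin n → Bool)) =>
            treeOutList v (List.ofFn (Gen₁ p.1) ++ List.ofFn p.2)
              = List.ofFn σ₁ ++ List.ofFn σ₂)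
          - pr (fun p : (Fin k₁ → (Fin n → Bool)) × (Fin k₂ → (Fin n → Bool)) =>
              treeOutList v (List.ofFn p.1 ++ List.ofFn p.2)
                = List.ofFn σ₁ ++ List.ofFn σ₂)|) := by
        simp only [Finset.sum_add_distrib, mul_add]
    _ ≤ γ₂ + γ₁ := add_le_add claimA claimB
    _ = γ₁ + γ₂ := by ring
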